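/- Let det_{n,k} = ((−1)^k / k!) Σ_{G ∈ SSC_{n,k}} (−1)^{β₀(G)} · G, where SSC_{n,k} is the set of totally cyclic directed multigraphs in Γ_{n,k} and β₀(G) is the number of connected components. Then Δ det_{n,k} = ((−1)^n / k!) Σ_{G ∈ AC_{n,k}} G, where AC_{n,k} is the set of acyclic directed multigraphs in Γ_{n,k} and Δ is the Laplace operator. -/

import Mathlib

open Finset

open scoped Classical

/-- Coefficient of `G` in `B_i H`: the operator `B_i` fixes `H` if its `i`-th
edge is not a loop, and sends `H` with `i`-th edge the loop `(a,a)` to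
`-∑_{m ≠ a}` (`H` with `i`-th edge replaced by `(a,m)`). -/
def bcoeff (n k : ℕ) (i : Fin k) (H G : Fin k → Fin n × Fin n) : ℤ :=
  if (H i).1 = (H i).2 then
    (if (∀ j, j ≠ i → G j = H j) ∧ (G i).1 = (H i).1 ∧ (G i).1 ≠ (G i).2 then -1 else 0)
  else (if G = H then 1 else 0)

/-- The operator `B_i`, extended linearly to the free module on `Γ_{n,k}`
(realized as `R`-valued coefficient functions on `Γ_{n,k}`). -/
noncomputable def Bop {R : Type*} [CommRing R] (n k : ℕ) (i : Fin k)
    (x : (Fin k → Fin n × Fin n) → R) : (Fin k → Fin n × Fin n) → R :=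
  fun G => ∑ H : Fin k → Fin n × Fin n, bcoeff n k i H G • x H

/-- The Laplace operator `Δ = B₁ ⋯ B_k`. -/
noncomputable def Delta {R : Type*} [CommRing R] (n k : ℕ) :
    ((Fin k → Fin n × Fin n) → R) → ((Fin k → Fin n × Fin n) → R) :=
  (List.finRange k).foldr (fun i F => Bop n k i ∘ F) id
/-- `G` contains a directed cycle. -/
def HasCycle (n k : ℕ) (G : Fin k → Fin n × Fin n) : Prop :=
  ∃ m : ℕ, 0 < m ∧ ∃ c : ZMod m → Fin k,
    ∀ j : ZMod m, (G (c j)).2 = (G (c (j + 1))).1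

/-- Edge `i` of `G` lies on a directed cycle. -/
def EdgeOnCycle (n k : ℕ) (G : Fin k → Fin n × Fin n) (i : Fin k) : Prop :=
  ∃ m : ℕ, 0 < m ∧ ∃ c : ZMod m → Fin k,
    (∀ j : ZMod m, (G (c j)).2 = (G (c (j + 1))).1) ∧ ∃ j : ZMod m, c j = i

/-- `G` is totally cyclic: every edge lies on a directed cycle. -/
def TotCyclic (n k : ℕ) (G : Fin k → Fin n × Fin n) : Prop :=
  ∀ i : Fin k, EdgeOnCycle n k G i

/-- Number of connected components of the underlying undirected graph. -/
noncomputable def beta0 (n k : ℕ) (G : Fin k → Fin n × Fin n) : ℕ :=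
  Nat.card (SimpleGraph.fromRel fun a b => ∃ i, G i = (a, b) ∨ G i = (b, a)).ConnectedComponent

/-- The higher determinant `det_{n,k} = ((-1)^k/k!) ∑_{G totally cyclic} (-1)^{β₀ G} G`. -/
noncomputable def detnk (n k : ℕ) : (Fin k → Fin n × Fin n) → ℚ := fun G =>
  if TotCyclic n k G then ((-1 : ℚ) ^ k / k.factorial) * (-1 : ℚ) ^ beta0 n k G else 0


/-!
At a loopless `G`, `(Δ x)(G) = ∑_S (-1)^|S| x(G_S)`, where `G_S` turns the edges of `S` into
loops at their tails. `G_S` is totally cyclic iff the edges outside `S` are, and has the same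
components, so `(Δ det)(G)` becomes a signed sum over the totally cyclic edge sets `T`.

The core identity: `∑_{S ⊆ T acyclic} (-1)^|S|` is `(-1)^(n + β₀(T))` if `T` is totally
cyclic and `0` otherwise (toggling an edge that lies on no cycle). Möbius inversion over the
subsets of the edge set then leaves `1` if `G` is acyclic and `0` otherwise.

The totally cyclic case goes by induction on a vertex set `A` carrying `T`. Every acyclic `S`
has a nonempty set of sources in `A`, and `∑_{∅ ≠ W ⊆ sources} (-1)^(|W|+1) = 1`. Swapping the
sums, `W` contributes `(-1)^(|W|+1)` times the same signed count for the edges with heads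
outside `W`. That count vanishes unless `W` is a union of components of `T`, and then induction
on `A \ W` applies; the resulting signs add up to `1` over the nonempty sets of components.
-/

open Relation

section Relations

variable {α : Type*} {r : α → α → Prop} {p : α → Prop} {a b : α}

theorem Relation.ReflTransGen.of_forall_imp (hp : ∀ x y, r x y → p x → p y)
    (h : ReflTransGen r a b) (ha : p a) : p b := by
  induction h with
  | refl => exact ha
  | tail _ hbc ih => exact hp _ _ hbc ih

theorem Relation.ReflTransGen.restrict (hp : ∀ x y, r x y → p x → p y)
    (h : ReflTransGen r a b) (ha : p a) : ReflTransGen (fun x y => r x y ∧ p y) a b := by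
  induction h with
  | refl => rfl
  | tail hab hbc ih => exact ih.tail ⟨hbc, hp _ _ hbc (hab.of_forall_imp hp ha)⟩

end Relations

section Cycles

variable {V E : Type*} {G : E → V × V} {S T : Finset E} {e i : E}

def arcRel (G : E → V × V) (T : Finset E) (a b : V) : Prop := ∃ i ∈ T, G i = (a, b)

def IsAcyclicOn (G : E → V × V) (S : Finset E) : Prop := ∀ v, ¬ TransGen (arcRel G S) v v

def IsTotallyCyclicOn (G : E → V × V) (T : Finset E) : Prop :=
  ∀ i ∈ T, ReflTransGen (arcRel G T) (G i).2 (G i).1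

theorem arcRel_of_mem (hi : i ∈ T) : arcRel G T (G i).1 (G i).2 := ⟨i, hi, rfl⟩

theorem arcRel_mono (h : S ⊆ T) : arcRel G S ≤ arcRel G T :=
  fun _ _ ⟨i, hi, hGi⟩ => ⟨i, h hi, hGi⟩

theorem IsAcyclicOn.anti (hT : IsAcyclicOn G T) (h : S ⊆ T) : IsAcyclicOn G S :=
  fun v hv => hT v (TransGen.mono (arcRel_mono h) v v hv)

theorem isAcyclicOn_empty : IsAcyclicOn G ∅ := by
  intro v hv
  obtain ⟨_, ⟨i, hi, _⟩, _⟩ := TransGen.head'_iff.1 hv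
  exact absurd hi (notMem_empty i)

theorem not_isAcyclicOn_iff :
    ¬ IsAcyclicOn G T ↔ ∃ i ∈ T, ReflTransGen (arcRel G T) (G i).2 (G i).1 := by
  simp only [IsAcyclicOn, not_forall, not_not]
  constructor
  · rintro ⟨v, hv⟩
    obtain ⟨b, ⟨i, hi, hGi⟩, hb⟩ := TransGen.head'_iff.1 hv
    exact ⟨i, hi, by simpa [hGi] using hb⟩
  · rintro ⟨i, hi, h⟩
    exact ⟨(G i).1, TransGen.head' (arcRel_of_mem hi) h⟩

theorem transGen_arcRel_insert {x y : V} (h : TransGen (arcRel G (insert e S)) x y) :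
    TransGen (arcRel G S) x y ∨
      ReflTransGen (arcRel G (insert e S)) x (G e).1 ∧
        ReflTransGen (arcRel G (insert e S)) (G e).2 y := by
  induction h with
  | single hxy =>
    obtain ⟨i, hi, hGi⟩ := hxy
    rcases mem_insert.1 hi with rfl | hi
    · exact Or.inr ⟨by rw [hGi], by rw [hGi]⟩
    · exact Or.inl (TransGen.single ⟨i, hi, hGi⟩)
  | tail hxb hbc ih =>
    obtain ⟨i, hi, hGi⟩ := hbc
    rcases mem_insert.1 hi with rfl | hi
    · exact Or.inr ⟨by simpa [hGi] using hxb.to_reflTransGen, by rw [hGi]⟩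
    · rcases ih with ih | ⟨h₁, h₂⟩
      · exact Or.inl (ih.tail ⟨i, hi, hGi⟩)
      · exact Or.inr ⟨h₁, h₂.tail ⟨i, mem_insert_of_mem hi, hGi⟩⟩

theorem isAcyclicOn_insert_iff (he : ¬ ReflTransGen (arcRel G T) (G e).2 (G e).1)
    (hS : insert e S ⊆ T) : IsAcyclicOn G (insert e S) ↔ IsAcyclicOn G S := by
  refine ⟨fun h => h.anti (subset_insert e S), fun h v hv => ?_⟩
  rcases transGen_arcRel_insert hv with hv | ⟨h₁, h₂⟩
  · exact h v hv
  · exact he (ReflTransGen.mono (arcRel_mono hS) _ _ (h₂.trans h₁))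

theorem exists_source_of_isAcyclicOn [Finite V] {A : Finset V} (hA : A.Nonempty)
    (hS : ∀ i ∈ S, (G i).1 ∈ A) (h : IsAcyclicOn G S) :
    ∃ v ∈ A, ∀ i ∈ S, (G i).2 ≠ v := by
  have : Std.Irrefl (TransGen (arcRel G S)) := ⟨h⟩
  obtain ⟨v, hvA, hmin⟩ :=
    (Finite.wellFounded_of_trans_of_irrefl (TransGen (arcRel G S))).has_min (A : Set V) hA
  refine ⟨v, hvA, fun i hi hv => hmin (G i).1 (hS i hi) (TransGen.single ⟨i, hi, ?_⟩)⟩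
  rw [← hv]

end Cycles

section SignedSums

variable {α : Type*} {R : Type*} [CommRing R]

theorem sum_powerset_filter_nonempty_neg_one_pow {Z : Finset α} (hZ : Z.Nonempty) :
    ∑ W ∈ Z.powerset with W.Nonempty, (-1 : ℤ) ^ (#W + 1) = 1 := by
  have h := sum_powerset_neg_one_pow_card_of_nonempty hZ
  rw [← sum_filter_add_sum_filter_not _ Finset.Nonempty] at h
  have hempty : {W ∈ Z.powerset | ¬ W.Nonempty} = {∅} := by
    ext W
    simp only [mem_filter, mem_powerset, not_nonempty_iff_eq_empty, mem_singleton]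
    exact ⟨And.right, fun h => ⟨h ▸ empty_subset Z, h⟩⟩
  simp only [hempty, sum_singleton, card_empty, pow_zero] at h
  simp only [pow_succ, mul_neg_one, sum_neg_distrib]
  omega

theorem sum_powerset_neg_one_pow_card_eq_ite (U : Finset α) :
    ∑ T ∈ U.powerset, (-1 : R) ^ #T = if U = ∅ then 1 else 0 := by
  have h := congrArg (Int.cast : ℤ → R) (sum_powerset_neg_one_pow_card (x := U))
  push_cast at h
  exact h

theorem sum_Icc_neg_one_pow_card (S U : Finset α) :
    ∑ T ∈ Icc S U, (-1 : R) ^ #T = if S = U then (-1) ^ #S else 0 := by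
  by_cases hSU : S ⊆ U
  · have hdisj : ∀ X ∈ (U \ S).powerset, Disjoint S X := fun X hX =>
      disjoint_of_subset_right (mem_powerset.1 hX) disjoint_sdiff
    rw [Icc_eq_image_powerset hSU, sum_image fun X₁ h₁ X₂ h₂ (h : S ∪ X₁ = S ∪ X₂) => by
      rw [← union_sdiff_cancel_left (hdisj X₁ h₁), ← union_sdiff_cancel_left (hdisj X₂ h₂),
        h]]
    rw [sum_congr rfl fun X hX => by rw [card_union_of_disjoint (hdisj X hX), pow_add],
      ← mul_sum, sum_powerset_neg_one_pow_card_eq_ite]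
    have : U \ S = ∅ ↔ S = U := by
      rw [sdiff_eq_empty_iff_subset]
      exact ⟨subset_antisymm hSU, fun h => h ▸ subset_refl S⟩
    simp only [this]
    split_ifs <;> simp
  · rw [Icc_eq_empty (fun h => hSU h), sum_empty, if_neg (fun h => hSU h.le)]

/-- Möbius inversion on the Boolean lattice of subsets of `U`. -/
theorem sum_powerset_neg_one_pow_mul_sum_powerset (U : Finset α) (g : Finset α → R) :
    ∑ T ∈ U.powerset, (-1) ^ #T * ∑ S ∈ T.powerset, (-1) ^ #S * g S = g U := by
  calc ∑ T ∈ U.powerset, (-1) ^ #T * ∑ S ∈ T.powerset, (-1) ^ #S * g S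
      = ∑ S ∈ U.powerset, ∑ T ∈ Icc S U, (-1) ^ #T * ((-1) ^ #S * g S) := by
        simp_rw [mul_sum]
        refine sum_comm' fun T S => ?_
        simp only [mem_powerset, mem_Icc]
        exact ⟨fun h => ⟨⟨h.2, h.1⟩, h.2.trans h.1⟩, fun h => ⟨h.1.2, h.1.1⟩⟩
    _ = ∑ S ∈ U.powerset, (if S = U then (-1) ^ #S else 0) * ((-1) ^ #S * g S) := by
        simp_rw [← sum_mul, sum_Icc_neg_one_pow_card]
    _ = g U := by
        simp only [ite_mul, zero_mul, sum_ite_eq', mem_powerset_self, if_true]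
        rw [← mul_assoc, ← mul_pow, neg_one_mul, neg_neg, one_pow, one_mul]

end SignedSums

section AcyclicSum

variable {V E : Type*} {G : E → V × V} {S T : Finset E} {e : E}

noncomputable def acyclicSum (G : E → V × V) (T : Finset E) : ℤ :=
  ∑ S ∈ T.powerset with IsAcyclicOn G S, (-1) ^ #S

theorem acyclicSum_empty : acyclicSum G ∅ = 1 := by
  simp [acyclicSum, filter_singleton, isAcyclicOn_empty]

/-- Toggling `e` is a sign-reversing involution on the acyclic subsets of `T`. -/
theorem acyclicSum_eq_zero (he : e ∈ T)
    (hcyc : ¬ ReflTransGen (arcRel G T) (G e).2 (G e).1) : acyclicSum G T = 0 := by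
  rw [acyclicSum, sum_filter, ← insert_erase he, sum_powerset_insert (notMem_erase e T),
    ← sum_add_distrib]
  refine sum_eq_zero fun S hS => ?_
  have hS' : insert e S ⊆ T := insert_subset he ((mem_powerset.1 hS).trans (erase_subset e T))
  have heS : e ∉ S := fun h => notMem_erase e T (mem_powerset.1 hS h)
  rw [isAcyclicOn_insert_iff hcyc hS', card_insert_of_notMem heS, pow_succ]
  split_ifs <;> ring

theorem acyclicSum_eq_sum_powerset [Finite V] {A : Finset V} (hA : A.Nonempty)
    (hT : ∀ i ∈ T, (G i).1 ∈ A) :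
    acyclicSum G T = ∑ W ∈ A.powerset with W.Nonempty,
      (-1) ^ (#W + 1) * acyclicSum G {i ∈ T | (G i).2 ∉ W} := by
  have hsources : ∀ S ∈ {S ∈ T.powerset | IsAcyclicOn G S},
      ∑ W ∈ (A.filter fun v => ∀ i ∈ S, (G i).2 ≠ v).powerset with W.Nonempty,
        (-1 : ℤ) ^ (#W + 1) = 1 := by
    intro S hS
    simp only [mem_filter, mem_powerset] at hS
    obtain ⟨v, hvA, hv⟩ := exists_source_of_isAcyclicOn hA (fun i hi => hT i (hS.1 hi)) hS.2
    exact sum_powerset_filter_nonempty_neg_one_pow ⟨v, mem_filter.2 ⟨hvA, hv⟩⟩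
  calc acyclicSum G T
      = ∑ S ∈ T.powerset with IsAcyclicOn G S,
          ∑ W ∈ (A.filter fun v => ∀ i ∈ S, (G i).2 ≠ v).powerset with W.Nonempty,
            (-1) ^ (#W + 1) * (-1) ^ #S := by
        refine sum_congr rfl fun S hS => ?_
        rw [← sum_mul, hsources S hS, one_mul]
    _ = ∑ W ∈ A.powerset with W.Nonempty, ∑ S ∈ {i ∈ T | (G i).2 ∉ W}.powerset with
          IsAcyclicOn G S, (-1) ^ (#W + 1) * (-1) ^ #S := by
        refine sum_comm' fun S W => ?_
        simp only [mem_filter, mem_powerset, subset_iff]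
        grind
    _ = _ := by simp only [acyclicSum, mul_sum]

theorem acyclicSum_cast_eq (G : E → V × V) (T : Finset E) :
    (acyclicSum G T : ℚ) =
      ∑ S ∈ T.powerset, (-1) ^ #S * if IsAcyclicOn G S then 1 else 0 := by
  simp [acyclicSum, sum_filter]

end AcyclicSum

namespace SimpleGraph

variable {V : Type*} (H : SimpleGraph V)

theorem natCard_connectedComponent_eq_card_image [Fintype V] :
    Nat.card H.ConnectedComponent = #(univ.image H.connectedComponentMk) := by
  rw [image_univ_of_surjective (fun C => C.exists_rep.imp fun _ => id), card_univ,
    Nat.card_eq_fintype_card]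

theorem card_image_connectedComponentMk_of_isolated {W : Finset V}
    (hW : ∀ v ∈ W, ∀ w, ¬ H.Adj v w) : #(W.image H.connectedComponentMk) = #W := by
  refine card_image_of_injOn fun v hv w _ h => ?_
  obtain rfl | ⟨u, hvu, -⟩ :=
    ((reachable_iff_reflTransGen v w).1 (ConnectedComponent.exact h)).cases_head
  · rfl
  · exact absurd hvu (hW v hv u)

theorem card_image_connectedComponentMk_congr {H' : SimpleGraph V} (hle : H' ≤ H) {s : Finset V}
    (h : ∀ v ∈ s, ∀ w, H.Reachable v w → H'.Reachable v w) :
    #(s.image H.connectedComponentMk) = #(s.image H'.connectedComponentMk) := by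
  have hsupp : ∀ K : SimpleGraph V,
      #(s.image K.connectedComponentMk) = #(s.image fun v => (K.connectedComponentMk v).supp) := by
    intro K
    rw [← card_image_of_injective _ ConnectedComponent.supp_injective, image_image]
    rfl
  rw [hsupp, hsupp, image_congr fun v hv => ?_]
  ext w
  simp only [ConnectedComponent.mem_supp_iff, ConnectedComponent.eq]
  exact ⟨fun hw => (h v hv w hw.symm).symm, fun hw => hw.mono hle⟩

theorem natCard_connectedComponent_eq_add [Fintype V] {W : Finset V}
    (hW : ∀ v w, H.Adj v w → v ∈ W → w ∈ W) :
    Nat.card H.ConnectedComponent =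
      #(W.image H.connectedComponentMk) + #(Wᶜ.image H.connectedComponentMk) := by
  rw [natCard_connectedComponent_eq_card_image, ← union_compl W, image_union,
    card_union_of_disjoint (Finset.disjoint_left.2 ?_)]
  rintro _ hv hw
  obtain ⟨v, hvW, rfl⟩ := mem_image.1 hv
  obtain ⟨w, hwW, hvw⟩ := mem_image.1 hw
  have hreach := (reachable_iff_reflTransGen v w).1 (ConnectedComponent.exact hvw.symm)
  exact mem_compl.1 hwW (hreach.of_forall_imp hW hvW)

end SimpleGraph

section Components

variable {V E : Type*} {G : E → V × V} {T : Finset E} {W : Finset V} {a b : V} {i : E}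

def underlyingGraph (G : E → V × V) (T : Finset E) : SimpleGraph V :=
  SimpleGraph.fromRel (arcRel G T)

noncomputable def numComponents (G : E → V × V) (T : Finset E) : ℕ :=
  Nat.card (underlyingGraph G T).ConnectedComponent

def IsArcClosed (G : E → V × V) (T : Finset E) (W : Finset V) : Prop :=
  ∀ i ∈ T, ((G i).1 ∈ W ↔ (G i).2 ∈ W)

theorem underlyingGraph_adj :
    (underlyingGraph G T).Adj a b ↔ a ≠ b ∧ (arcRel G T a b ∨ arcRel G T b a) :=
  SimpleGraph.fromRel_adj ..

theorem reachable_underlyingGraph_of_mem (hi : i ∈ T) :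
    (underlyingGraph G T).Reachable (G i).1 (G i).2 := by
  by_cases h : (G i).1 = (G i).2
  · rw [h]
  · exact (underlyingGraph_adj.2 ⟨h, Or.inl (arcRel_of_mem hi)⟩).reachable

theorem numComponents_empty [Fintype V] : numComponents G ∅ = Fintype.card V := by
  rw [numComponents, SimpleGraph.natCard_connectedComponent_eq_card_image,
    SimpleGraph.card_image_connectedComponentMk_of_isolated, card_univ]
  rintro v - w h
  rcases (underlyingGraph_adj.1 h).2 with ⟨i, hi, -⟩ | ⟨i, hi, -⟩ <;>
    exact notMem_empty i hi

theorem arcRel_filter_iff :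
    arcRel G {i ∈ T | (G i).2 ∉ W} a b ↔ arcRel G T a b ∧ b ∉ W := by
  constructor
  · rintro ⟨i, hi, hGi⟩
    rw [mem_filter, hGi] at hi
    exact ⟨⟨i, hi.1, hGi⟩, hi.2⟩
  · rintro ⟨⟨i, hi, hGi⟩, hb⟩
    exact ⟨i, mem_filter.2 ⟨hi, by rwa [hGi]⟩, hGi⟩

namespace IsArcClosed

theorem mem_iff (hW : IsArcClosed G T W) (h : arcRel G T a b) : a ∈ W ↔ b ∈ W := by
  obtain ⟨i, hi, hGi⟩ := h
  simpa [hGi] using hW i hi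

theorem mem_iff_of_adj (hW : IsArcClosed G T W) (h : (underlyingGraph G T).Adj a b) :
    a ∈ W ↔ b ∈ W := by
  rcases (underlyingGraph_adj.1 h).2 with h | h
  · exact hW.mem_iff h
  · exact (hW.mem_iff h).symm

theorem mem_iff_of_reachable (hW : IsArcClosed G T W) (h : (underlyingGraph G T).Reachable a b) :
    a ∈ W ↔ b ∈ W :=
  ((SimpleGraph.reachable_iff_reflTransGen a b).1 h).of_forall_imp
    (p := fun x => a ∈ W ↔ x ∈ W) (fun _ _ hxy hx => hx.trans (hW.mem_iff_of_adj hxy)) Iff.rfl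

theorem mem_sdiff_of_mem_filter {A : Finset V} (hW : IsArcClosed G T W)
    (hT : ∀ i ∈ T, (G i).1 ∈ A ∧ (G i).2 ∈ A) :
    ∀ i ∈ {i ∈ T | (G i).2 ∉ W}, (G i).1 ∈ A \ W ∧ (G i).2 ∈ A \ W := by
  intro i hi
  rw [mem_filter] at hi
  exact ⟨mem_sdiff.2 ⟨(hT i hi.1).1, (not_congr (hW i hi.1)).2 hi.2⟩,
    mem_sdiff.2 ⟨(hT i hi.1).2, hi.2⟩⟩

/-- Removing the edges inside a union `W` of components isolates the vertices of `W` and leaves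
the other components intact. -/
theorem numComponents_filter_add [Fintype V] (hW : IsArcClosed G T W) :
    numComponents G {i ∈ T | (G i).2 ∉ W} +
      #(W.image (underlyingGraph G T).connectedComponentMk) = numComponents G T + #W := by
  set H := underlyingGraph G T
  set H' := underlyingGraph G {i ∈ T | (G i).2 ∉ W}
  have hle : H' ≤ H := fun x y h => by
    rw [underlyingGraph_adj, arcRel_filter_iff, arcRel_filter_iff] at h
    exact underlyingGraph_adj.2 ⟨h.1, h.2.imp And.left And.left⟩
  have hiso : ∀ v ∈ W, ∀ w, ¬ H'.Adj v w := by
    intro v hv w h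
    rw [underlyingGraph_adj, arcRel_filter_iff, arcRel_filter_iff] at h
    rcases h.2 with ⟨h, hw⟩ | ⟨-, hv'⟩
    · exact hw ((hW.mem_iff h).1 hv)
    · exact hv' hv
  have hreach : ∀ v ∈ Wᶜ, ∀ w, H.Reachable v w → H'.Reachable v w := by
    intro v hv w h
    rw [SimpleGraph.reachable_iff_reflTransGen] at h ⊢
    refine ReflTransGen.mono ?_ _ _
      (h.restrict (p := (· ∉ W)) (fun x y hxy hx => ?_) (mem_compl.1 hv))
    · rintro x y ⟨hxy, hy⟩
      have hx := (not_congr (hW.mem_iff_of_adj hxy)).2 hy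
      rw [underlyingGraph_adj] at hxy ⊢
      rw [arcRel_filter_iff, arcRel_filter_iff]
      exact ⟨hxy.1, hxy.2.imp (⟨·, hy⟩) (⟨·, hx⟩)⟩
    · exact (not_congr (hW.mem_iff_of_adj hxy)).1 hx
  rw [numComponents, numComponents,
    H.natCard_connectedComponent_eq_add fun _ _ h => (hW.mem_iff_of_adj h).1,
    H'.natCard_connectedComponent_eq_add fun v w h hv => absurd h (hiso v hv w),
    H'.card_image_connectedComponentMk_of_isolated hiso,
    H.card_image_connectedComponentMk_congr hle hreach]
  ring

end IsArcClosed

theorem IsTotallyCyclicOn.isArcClosed (hT : IsTotallyCyclicOn G T)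
    (hW : ∀ i ∈ T, (G i).1 ∈ W → (G i).2 ∈ W) : IsArcClosed G T W := by
  refine fun i hi => ⟨hW i hi, fun h => (hT i hi).of_forall_imp ?_ h⟩
  rintro x y ⟨j, hj, hGj⟩ hx
  simpa [hGj] using hW j hj (by simpa [hGj] using hx)

theorem IsTotallyCyclicOn.filter (hT : IsTotallyCyclicOn G T) (hW : IsArcClosed G T W) :
    IsTotallyCyclicOn G {i ∈ T | (G i).2 ∉ W} := by
  intro i hi
  rw [mem_filter] at hi
  refine ReflTransGen.mono (fun x y h => arcRel_filter_iff.2 h) _ _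
    ((hT i hi.1).restrict (p := (· ∉ W)) (fun x y hxy hx => ?_) hi.2)
  exact (not_congr (hW.mem_iff hxy)).1 hx

/-- Sending `W` to the set of components it meets matches the nonempty unions of components
inside `A` with the nonempty sets of components meeting `A`. -/
theorem sum_isArcClosed_neg_one_pow {A : Finset V} (hA : A.Nonempty)
    (hT : ∀ i ∈ T, (G i).1 ∈ A ∧ (G i).2 ∈ A) :
    ∑ W ∈ A.powerset with W.Nonempty ∧ IsArcClosed G T W,
      (-1 : ℤ) ^ (#(W.image (underlyingGraph G T).connectedComponentMk) + 1) = 1 := by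
  set mk := (underlyingGraph G T).connectedComponentMk
  refine .trans ?_ (sum_powerset_filter_nonempty_neg_one_pow (hA.image mk))
  refine sum_nbij' (fun W => W.image mk) (fun 𝒞 => {v ∈ A | mk v ∈ 𝒞}) ?_ ?_ ?_ ?_
    fun _ _ => rfl
  · intro W hW
    simp only [mem_filter, mem_powerset] at hW ⊢
    exact ⟨image_subset_image hW.1, hW.2.1.image mk⟩
  · intro 𝒞 h𝒞
    simp only [mem_filter, mem_powerset] at h𝒞 ⊢
    obtain ⟨C, hC⟩ := h𝒞.2
    obtain ⟨v, hv, rfl⟩ := mem_image.1 (h𝒞.1 hC)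
    refine ⟨filter_subset _ A, ⟨v, mem_filter.2 ⟨hv, hC⟩⟩, fun i hi => ?_⟩
    simp only [mem_filter, (hT i hi).1, (hT i hi).2, true_and, mk,
      SimpleGraph.ConnectedComponent.sound (reachable_underlyingGraph_of_mem hi)]
  · intro W hW
    simp only [mem_filter, mem_powerset] at hW
    ext v
    simp only [mem_filter, mem_image]
    refine ⟨fun ⟨_, w, hw, hwv⟩ => ?_, fun hv => ⟨hW.1 hv, v, hv, rfl⟩⟩
    exact (hW.2.2.mem_iff_of_reachable (SimpleGraph.ConnectedComponent.exact hwv)).1 hw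
  · intro 𝒞 h𝒞
    simp only [mem_filter, mem_powerset] at h𝒞
    ext C
    simp only [mem_filter, mem_image]
    refine ⟨fun ⟨v, ⟨_, hv⟩, hvC⟩ => hvC ▸ hv, fun hC => ?_⟩
    obtain ⟨v, hv, rfl⟩ := mem_image.1 (h𝒞.1 hC)
    exact ⟨v, ⟨hv, hC⟩, rfl⟩

end Components

section MainIdentity

variable {V E : Type*} {G : E → V × V} {T : Finset E} {W : Finset V}

/-- Some edge leaves `W`; it lies on no cycle of the edges with heads outside `W`, since none of
those ends in `W`. -/
theorem acyclicSum_filter_eq_zero (hT : IsTotallyCyclicOn G T) (hW : ¬ IsArcClosed G T W) :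
    acyclicSum G {i ∈ T | (G i).2 ∉ W} = 0 := by
  obtain ⟨i, hi, hiW, hiW'⟩ : ∃ i ∈ T, (G i).1 ∈ W ∧ (G i).2 ∉ W := by
    by_contra! h
    exact hW (hT.isArcClosed h)
  refine acyclicSum_eq_zero (mem_filter.2 ⟨hi, hiW'⟩) fun h => ?_
  obtain heq | ⟨_, -, ⟨j, hj, hGj⟩⟩ := h.cases_tail
  · exact hiW' (heq ▸ hiW)
  · exact (mem_filter.1 hj).2 (by rwa [hGj])

theorem acyclicSum_of_isTotallyCyclicOn [Fintype V] (A : Finset V) :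
    ∀ T, (∀ i ∈ T, (G i).1 ∈ A ∧ (G i).2 ∈ A) → IsTotallyCyclicOn G T →
      acyclicSum G T = (-1) ^ (Fintype.card V + numComponents G T) := by
  induction A using Finset.strongInduction with
  | H A ih =>
  intro T hTA hTC
  obtain rfl | hA := A.eq_empty_or_nonempty
  · obtain rfl : T = ∅ := eq_empty_of_forall_notMem fun i hi => notMem_empty _ (hTA i hi).1
    rw [acyclicSum_empty, numComponents_empty, ← two_mul, pow_mul, neg_one_sq, one_pow]
  set mk := (underlyingGraph G T).connectedComponentMk
  rw [acyclicSum_eq_sum_powerset hA fun i hi => (hTA i hi).1]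
  calc _ = ∑ W ∈ A.powerset with W.Nonempty, if IsArcClosed G T W then
          (-1) ^ (Fintype.card V + numComponents G T) * (-1) ^ (#(W.image mk) + 1) else 0 := by
        refine sum_congr rfl fun W hW => ?_
        rw [mem_filter, mem_powerset] at hW
        split_ifs with hWc
        · have hcount : _ + #(W.image mk) = _ := hWc.numComponents_filter_add
          rw [ih (A \ W) (sdiff_ssubset hW.1 hW.2) _ (hWc.mem_sdiff_of_mem_filter hTA)
            (hTC.filter hWc), ← pow_add, ← pow_add]
          exact neg_one_pow_congr (by simp only [Nat.even_iff]; omega)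
        · rw [acyclicSum_filter_eq_zero hTC hWc, mul_zero]
    _ = (-1) ^ (Fintype.card V + numComponents G T) *
          ∑ W ∈ A.powerset with W.Nonempty ∧ IsArcClosed G T W, (-1) ^ (#(W.image mk) + 1) := by
        rw [mul_sum, ← filter_filter, ← sum_filter]
    _ = _ := by rw [sum_isArcClosed_neg_one_pow hA hTA, mul_one]

theorem acyclicSum_eq [Fintype V] (T : Finset E) :
    acyclicSum G T =
      if IsTotallyCyclicOn G T then (-1) ^ (Fintype.card V + numComponents G T) else 0 := by
  split_ifs with hT
  · exact acyclicSum_of_isTotallyCyclicOn univ T (fun _ _ => ⟨mem_univ _, mem_univ _⟩) hT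
  · obtain ⟨i, hi, hcyc⟩ : ∃ i ∈ T, ¬ ReflTransGen (arcRel G T) (G i).2 (G i).1 := by
      simpa [IsTotallyCyclicOn] using hT
    exact acyclicSum_eq_zero hi hcyc

end MainIdentity

section Laplacian

variable {V E : Type*} {n k : ℕ}

noncomputable def loopify (G : E → V × V) (S : Finset E) : E → V × V :=
  fun i => if i ∈ S then ((G i).1, (G i).1) else G i

theorem loopify_empty {G : E → V × V} : loopify G ∅ = G :=
  funext fun i => if_neg (notMem_empty i)

theorem loopify_update [DecidableEq E] {G : E → V × V} {S : Finset E} {i : E} (hi : i ∉ S) :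
    loopify (Function.update G i ((G i).1, (G i).1)) S = loopify G (insert i S) := by
  funext j
  by_cases hj : j = i
  · subst hj
    simp [loopify, hi]
  · simp [loopify, hj]

theorem bcoeff_eq (i : Fin k) (H G : Fin k → Fin n × Fin n) :
    bcoeff n k i H G = if (G i).1 = (G i).2 then 0 else
      (if H = G then 1 else 0) - (if H = Function.update G i ((G i).1, (G i).1) then 1 else 0) := by
  unfold bcoeff
  by_cases hG : (G i).1 = (G i).2
  · rw [if_pos hG]
    split_ifs with hH h₁ h₂
    · exact absurd hG h₁.2.2
    · rfl
    · exact absurd (h₂ ▸ hG) hH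
    · rfl
  have hupdate : H = Function.update G i ((G i).1, (G i).1) ↔
      (H i).1 = (H i).2 ∧ (∀ j, j ≠ i → G j = H j) ∧ (G i).1 = (H i).1 := by
    rw [Function.eq_update_iff, Prod.ext_iff]
    exact ⟨fun ⟨⟨h₁, h₂⟩, h₃⟩ => ⟨h₁.trans h₂.symm, fun j hj => (h₃ j hj).symm, h₁.symm⟩,
      fun ⟨h₁, h₂, h₃⟩ =>
        ⟨⟨h₃.symm, h₁.symm.trans h₃.symm⟩, fun j hj => (h₂ j hj).symm⟩⟩
  rw [if_neg hG]
  by_cases hH : (H i).1 = (H i).2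
  · have hne : H ≠ G := fun h => hG (h ▸ hH)
    simp only [if_neg hne, hupdate, hH, true_and, ne_eq, hG, not_false_eq_true,
      and_true]
    split_ifs <;> simp
  · have hne : H ≠ Function.update G i ((G i).1, (G i).1) := fun h => hH (hupdate.1 h).1
    simp only [if_neg hH, if_neg hne, sub_zero, eq_comm]

theorem Bop_apply {R : Type*} [CommRing R] (i : Fin k) (x : (Fin k → Fin n × Fin n) → R)
    (G : Fin k → Fin n × Fin n) :
    Bop n k i x G = if (G i).1 = (G i).2 then 0
      else x G - x (Function.update G i ((G i).1, (G i).1)) := by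
  simp only [Bop, bcoeff_eq]
  split_ifs
  · simp
  · simp [sub_smul, sum_sub_distrib, ite_smul]

theorem foldr_Bop_apply {R : Type*} [CommRing R] (l : List (Fin k)) (hl : l.Nodup)
    (x : (Fin k → Fin n × Fin n) → R) (G : Fin k → Fin n × Fin n) :
    l.foldr (fun i F => Bop n k i ∘ F) id x G = if ∃ i ∈ l, (G i).1 = (G i).2 then 0
      else ∑ S ∈ l.toFinset.powerset, (-1) ^ #S * x (loopify G S) := by
  induction l generalizing G with
  | nil => simp [loopify_empty]
  | cons i l ih =>
    rw [List.nodup_cons] at hl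
    have hil : i ∉ l.toFinset := by simpa using hl.1
    rw [List.foldr_cons, Function.comp_apply, Bop_apply, ih hl.2, ih hl.2,
      List.toFinset_cons, sum_powerset_insert hil]
    set U := Function.update G i ((G i).1, (G i).1)
    have hU : ∀ j ∈ l, U j = G j := fun j hj =>
      Function.update_of_ne (fun (h : j = i) => hl.1 (h ▸ hj)) _ _
    by_cases hGi : (G i).1 = (G i).2
    · simp [hGi]
    by_cases hGl : ∃ j ∈ l, (G j).1 = (G j).2
    · have hUl : ∃ j ∈ l, (U j).1 = (U j).2 :=
        let ⟨j, hj, h⟩ := hGl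
        ⟨j, hj, by rwa [hU j hj]⟩
      simp [hGl, hUl]
    have hUl : ¬ ∃ j ∈ l, (U j).1 = (U j).2 := by
      rintro ⟨j, hj, h⟩
      exact hGl ⟨j, hj, by rwa [hU j hj] at h⟩
    simp only [hGi, hGl, hUl, List.mem_cons, exists_eq_or_imp, or_self, if_false]
    rw [sub_eq_add_neg, ← sum_neg_distrib]
    congr 1
    refine sum_congr rfl fun S hS => ?_
    have hiS : i ∉ S := fun h => hil (mem_powerset.1 hS h)
    rw [loopify_update hiS, card_insert_of_notMem hiS, pow_succ]
    ring

theorem Delta_apply {R : Type*} [CommRing R] (x : (Fin k → Fin n × Fin n) → R)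
    (G : Fin k → Fin n × Fin n) :
    Delta n k x G = if ∃ i, (G i).1 = (G i).2 then 0
      else ∑ S ∈ univ.powerset, (-1) ^ #S * x (loopify G S) := by
  rw [Delta, foldr_Bop_apply _ (List.nodup_finRange k), List.toFinset_finRange]
  simp [List.mem_finRange]

end Laplacian

section FiniteGraphs

variable {V E : Type*} {n k : ℕ}

theorem exists_seq_of_reflTransGen {G : E → V × V} {T : Finset E} {x y : V}
    (h : ReflTransGen (arcRel G T) x y) {i : E} (hi : (G i).2 = x) :
    ∃ p, ∃ w : ℕ → E,
      w 0 = i ∧ (∀ t < p, (G (w t)).2 = (G (w (t + 1))).1) ∧ (G (w p)).2 = y := by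
  induction h using ReflTransGen.head_induction_on generalizing i with
  | refl => exact ⟨0, fun _ => i, rfl, by simp, hi⟩
  | head hxz _ ih =>
    obtain ⟨f, -, hGf⟩ := hxz
    obtain ⟨p, w, hw0, hw, hwp⟩ := ih (i := f) (by rw [hGf])
    refine ⟨p + 1, fun t => if t = 0 then i else w (t - 1), by simp, fun t ht => ?_,
      by simpa using hwp⟩
    rcases t with _ | t
    · simp [hw0, hGf, hi]
    · simpa using hw t (by omega)

theorem edgeOnCycle_iff {G : Fin k → Fin n × Fin n} {i : Fin k} :
    EdgeOnCycle n k G i ↔ ReflTransGen (arcRel G univ) (G i).2 (G i).1 := by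
  constructor
  · rintro ⟨m, hm, c, hc, j₀, rfl⟩
    have hpath :
        ∀ t : ℕ, ReflTransGen (arcRel G univ) (G (c j₀)).2 (G (c (j₀ + 1 + t))).1 := by
      intro t
      induction t with
      | zero => rw [Nat.cast_zero, add_zero, ← hc j₀]
      | succ t ih =>
        refine ih.tail ⟨c (j₀ + 1 + t), mem_univ _, Prod.ext rfl ?_⟩
        rw [hc, Nat.cast_succ, add_assoc (j₀ + 1)]
    simpa [Nat.cast_pred hm, ZMod.natCast_self] using hpath (m - 1)
  · intro h
    obtain ⟨p, w, hw0, hw, hwp⟩ := exists_seq_of_reflTransGen h rfl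
    refine ⟨p + 1, p.succ_pos, fun j => w j.val, fun j => ?_, 0, by simpa using hw0⟩
    have hj : (j + 1).val = (j.val + 1) % (p + 1) := by
      rw [← ZMod.val_natCast, Nat.cast_succ, ZMod.natCast_zmod_val]
    have hlt := ZMod.val_lt j
    show (G (w j.val)).2 = (G (w (j + 1).val)).1
    rcases Nat.lt_succ_iff_lt_or_eq.1 hlt with hjp | hjp
    · rw [hj, Nat.mod_eq_of_lt (by omega)]
      exact hw _ hjp
    · rw [hj, hjp, Nat.mod_self, hw0, hwp]

theorem hasCycle_iff_not_isAcyclicOn {G : Fin k → Fin n × Fin n} :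
    HasCycle n k G ↔ ¬ IsAcyclicOn G univ := by
  rw [not_isAcyclicOn_iff]
  constructor
  · rintro ⟨m, hm, c, hc⟩
    exact ⟨c 0, mem_univ _, edgeOnCycle_iff.1 ⟨m, hm, c, hc, 0, rfl⟩⟩
  · rintro ⟨i, -, h⟩
    obtain ⟨m, hm, c, hc, -⟩ := edgeOnCycle_iff.2 h
    exact ⟨m, hm, c, hc⟩

theorem reflTransGen_arcRel_loopify [Fintype E] [DecidableEq E] (G : E → V × V) (S : Finset E) :
    ReflTransGen (arcRel (loopify G S) univ) = ReflTransGen (arcRel G Sᶜ) := by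
  refine le_antisymm (reflTransGen_closed ?_) (ReflTransGen.mono ?_)
  · rintro a b ⟨i, -, hi⟩
    by_cases hiS : i ∈ S
    · simp only [loopify, hiS, if_true, Prod.mk.injEq] at hi
      rw [← hi.1, ← hi.2]
    · exact .single ⟨i, mem_compl.2 hiS, by simpa [loopify, hiS] using hi⟩
  · rintro a b ⟨i, hi, hGi⟩
    exact ⟨i, mem_univ _, by simp [loopify, mem_compl.1 hi, hGi]⟩

theorem totCyclic_loopify_iff {G : Fin k → Fin n × Fin n} {S : Finset (Fin k)} :
    TotCyclic n k (loopify G S) ↔ IsTotallyCyclicOn G Sᶜ := by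
  simp only [TotCyclic, edgeOnCycle_iff, reflTransGen_arcRel_loopify, IsTotallyCyclicOn, mem_compl]
  refine forall_congr' fun i => ?_
  by_cases hi : i ∈ S
  · simp only [loopify, hi, if_true, not_true_eq_false, IsEmpty.forall_iff, iff_true]
    rfl
  · simp only [loopify, hi, if_false, not_false_eq_true, forall_const]

theorem beta0_loopify {G : Fin k → Fin n × Fin n} {S : Finset (Fin k)} :
    beta0 n k (loopify G S) = numComponents G Sᶜ := by
  have hpair : ∀ {a b : Fin n} (i : Fin k), a ≠ b →
      (loopify G S i = (a, b) ↔ i ∈ Sᶜ ∧ G i = (a, b)) := by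
    intro a b i hab
    by_cases hi : i ∈ S
    · simp only [loopify, hi, if_true, Prod.mk.injEq, mem_compl, not_true_eq_false, false_and,
        iff_false, not_and]
      exact fun ha hb => hab (ha ▸ hb)
    · simp [loopify, hi]
  rw [beta0, numComponents]
  congr 2
  ext a b
  rw [SimpleGraph.fromRel_adj, underlyingGraph_adj]
  refine and_congr_right fun hab => ?_
  simp only [arcRel, hpair _ hab, hpair _ (Ne.symm hab)]
  grind

theorem detnk_loopify {G : Fin k → Fin n × Fin n} (S : Finset (Fin k)) :
    detnk n k (loopify G S) = if IsTotallyCyclicOn G Sᶜ then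
      (-1 : ℚ) ^ k / k.factorial * (-1) ^ numComponents G Sᶜ else 0 := by
  simp only [detnk, totCyclic_loopify_iff, beta0_loopify]

theorem neg_one_pow_mul_detnk_loopify_compl {G : Fin k → Fin n × Fin n} (T : Finset (Fin k)) :
    (-1) ^ #Tᶜ * detnk n k (loopify G Tᶜ) =
      (-1 : ℚ) ^ n / k.factorial * ((-1) ^ #T * (acyclicSum G T : ℚ)) := by
  rw [detnk_loopify, compl_compl, acyclicSum_eq, Fintype.card_fin]
  split_ifs
  · have hk : #Tᶜ + #T = k := by
      rw [card_compl, Fintype.card_fin]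
      exact Nat.sub_add_cancel (card_le_univ T |>.trans_eq (Fintype.card_fin k))
    calc (-1) ^ #Tᶜ * ((-1) ^ k / k.factorial * (-1) ^ numComponents G T)
        = (-1 : ℚ) ^ (#Tᶜ + k + numComponents G T) / k.factorial := by
          rw [pow_add, pow_add]; ring
      _ = (-1 : ℚ) ^ (n + (#T + (n + numComponents G T))) / k.factorial := by
          congr 1
          exact neg_one_pow_congr (by simp only [Nat.even_iff]; omega)
      _ = _ := by push_cast; rw [pow_add, pow_add, pow_add]; ring
  · simp

end FiniteGraphs

/-- `Δ det_{n,k} = ((-1)^n/k!) ∑_{G acyclic} G`. -/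
theorem stmt17 (n k : ℕ) :
    Delta n k (detnk n k) = fun G =>
      if ¬ HasCycle n k G then (-1 : ℚ) ^ n / k.factorial else 0 := by
  funext G
  rw [Delta_apply]
  by_cases hloop : ∃ i, (G i).1 = (G i).2
  · obtain ⟨i, hi⟩ := hloop
    have hcyc : HasCycle n k G := ⟨1, one_pos, fun _ => i, fun _ => hi.symm⟩
    rw [if_pos ⟨i, hi⟩, if_neg (not_not.2 hcyc)]
  calc (if ∃ i, (G i).1 = (G i).2 then 0 else _)
      = ∑ T ∈ univ.powerset, (-1) ^ #Tᶜ * detnk n k (loopify G Tᶜ) := by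
        rw [if_neg hloop]
        exact sum_nbij' compl compl (by simp) (by simp) (by simp) (by simp) (by simp)
    _ = (-1) ^ n / k.factorial * (if IsAcyclicOn G univ then 1 else 0) := by
        simp_rw [neg_one_pow_mul_detnk_loopify_compl, ← mul_sum, acyclicSum_cast_eq,
          sum_powerset_neg_one_pow_mul_sum_powerset]
    _ = _ := by simp [hasCycle_iff_not_isAcyclicOn]
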